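/- Let ω ⊂ ℝⁿ be a bounded open set, let x₀ ∈ ω and ρ > 0 be such that D_ρ(x₀) ⊂ ω. Then there exists a constant C_ρ > 0, depending only on n and ρ (in particular independent of x₀), such that for every v ∈ Ĥ^{1/2}(ω;ℝ^m) one has ∫_{ℝⁿ} |v(x)|²/(|x−x₀|+1)^{n+1} dx ≤ C_ρ ( E(v, D_ρ(x₀)) + ∫_{D_ρ(x₀)} |v|² dx ). -/

import Mathlib

/-!
Fix `x` in `D_{ρ/2}(x₀)`. For `y` outside `D_ρ(x₀)` one has `ρ/2 ≤ |x - y| ≤ (3/2)(|y - x₀| + 1)` and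
`|v y|² ≤ 2|v x - v y|² + 2|v x|²`, so `|v y|² / (|y - x₀| + 1)^(n+1)` is bounded by a multiple of
the energy kernel at `(x, y)` plus `2|v x|²` times the weight `(|y - x₀| + 1)^-(n+1)`, whose integral over
`ℝⁿ` is finite and does not depend on `x₀`. Integrating in `y` over the complement of `D_ρ(x₀)` and
averaging in `x` over `D_{ρ/2}(x₀)` bounds the tail by the cross term of `E(v, D_ρ(x₀))` and
`∫_{D_ρ(x₀)} |v|²`; on `D_ρ(x₀)` itself the weight is at most `1`.
-/

open MeasureTheory Metric Set Filter Topology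
open scoped ENNReal

noncomputable section

abbrev En (n : ℕ) := EuclideanSpace ℝ (Fin n)

/-- The normalization constant `γ_n = Γ((n+1)/2)/π^((n+1)/2)`. -/
def gam (n : ℕ) : ℝ := Real.Gamma (((n : ℝ) + 1) / 2) / Real.pi ^ (((n : ℝ) + 1) / 2)

/-- The kernel `|v x - v y|² / |x - y|^(n+1)` as an extended nonnegative real. -/
def kern {n m : ℕ} (v : En n → En m) (x y : En n) : ℝ≥0∞ :=
  ENNReal.ofReal (‖v x - v y‖ ^ 2 / ‖x - y‖ ^ (n + 1))

/-- The 1/2-Dirichlet energy `E(v, ω)` (extended-real valued). -/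
def energyE {n m : ℕ} (v : En n → En m) (ω : Set (En n)) : ℝ≥0∞ :=
  ENNReal.ofReal (gam n / 4) * (∫⁻ x in ω, ∫⁻ y in ω, kern v x y) +
    ENNReal.ofReal (gam n / 2) * (∫⁻ x in ω, ∫⁻ y in ωᶜ, kern v x y)

/-- `v ∈ L²_loc(ℝⁿ; ℝᵐ)`. -/
def MemL2loc {n m : ℕ} (v : En n → En m) : Prop :=
  AEStronglyMeasurable v (volume : Measure (En n)) ∧
    ∀ R : ℝ, IntegrableOn (fun x => ‖v x‖ ^ 2) (ball (0 : En n) R)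

/-- `v ∈ Ĥ^{1/2}(ω; ℝᵐ)`: locally square-integrable with finite 1/2-Dirichlet energy. -/
def MemHatH {n m : ℕ} (v : En n → En m) (ω : Set (En n)) : Prop :=
  MemL2loc v ∧ energyE v ω < ⊤

section Pointwise

variable {E F : Type*} [SeminormedAddCommGroup E] [SeminormedAddCommGroup F]

theorem sq_div_add_one_pow_le_of_mem_ball_of_notMem_ball (k : ℕ) {ρ : ℝ} (hρ : 0 < ρ)
    (v : E → F) {x₀ x y : E} (hx : x ∈ ball x₀ (ρ / 2)) (hy : y ∉ ball x₀ ρ) :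
    ‖v y‖ ^ 2 / (‖y - x₀‖ + 1) ^ k ≤
      2 * (3 / 2) ^ k * (‖v x - v y‖ ^ 2 / ‖x - y‖ ^ k) +
        2 * ‖v x‖ ^ 2 * ((‖y - x₀‖ + 1) ^ k)⁻¹ := by
  rw [mem_ball, dist_eq_norm] at hx
  rw [mem_ball, dist_eq_norm, not_lt] at hy
  have hxy_pos : 0 < ‖x - y‖ := by
    have := norm_sub_le_norm_sub_add_norm_sub y x x₀
    rw [norm_sub_rev y x] at this
    linarith
  have hxy_le : ‖x - y‖ ≤ 3 / 2 * (‖y - x₀‖ + 1) := by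
    have := norm_sub_le_norm_sub_add_norm_sub x x₀ y
    rw [norm_sub_rev x₀ y] at this
    linarith
  have hvy : ‖v y‖ ^ 2 ≤ 2 * ‖v x - v y‖ ^ 2 + 2 * ‖v x‖ ^ 2 := by
    have := norm_le_insert (v x) (v y)
    nlinarith [sq_nonneg (‖v x - v y‖ - ‖v x‖), norm_nonneg (v y)]
  have hweight : ((‖y - x₀‖ + 1) ^ k)⁻¹ ≤ (3 / 2) ^ k / ‖x - y‖ ^ k := by
    rw [← div_pow, ← inv_pow, ← one_div]
    refine pow_le_pow_left₀ (by positivity) ?_ k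
    rw [div_le_div_iff₀ (by positivity) hxy_pos]
    linarith
  calc ‖v y‖ ^ 2 / (‖y - x₀‖ + 1) ^ k
      ≤ (2 * ‖v x - v y‖ ^ 2 + 2 * ‖v x‖ ^ 2) * ((‖y - x₀‖ + 1) ^ k)⁻¹ := by
        rw [div_eq_mul_inv]; gcongr
    _ ≤ 2 * ‖v x - v y‖ ^ 2 * ((3 / 2) ^ k / ‖x - y‖ ^ k) +
          2 * ‖v x‖ ^ 2 * ((‖y - x₀‖ + 1) ^ k)⁻¹ := by
        rw [add_mul]; gcongr
    _ = _ := by ring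

end Pointwise

section Weight

variable {E : Type*} [NormedAddCommGroup E] [NormedSpace ℝ E] [FiniteDimensional ℝ E]
  [MeasurableSpace E] [BorelSpace E] (μ : Measure E) [μ.IsAddHaarMeasure]

theorem lintegral_inv_norm_add_one_pow_lt_top {k : ℕ} (hk : Module.finrank ℝ E < k) :
    ∫⁻ y, ENNReal.ofReal (((‖y‖ + 1) ^ k)⁻¹) ∂μ < ∞ := by
  have hrpow (y : E) : ((‖y‖ + 1) ^ k)⁻¹ = (1 + ‖y‖) ^ (-(k : ℝ)) := by
    rw [Real.rpow_neg (by positivity), Real.rpow_natCast, add_comm]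
  simpa only [hrpow] using finite_integral_one_add_norm (μ := μ) (by exact_mod_cast hk)

end Weight

section Tail

variable {n m : ℕ}

def weightedSq (v : En n → En m) (x₀ y : En n) : ℝ≥0∞ :=
  ENNReal.ofReal (‖v y‖ ^ 2 / (‖y - x₀‖ + 1) ^ (n + 1))

variable (n) in
def decayIntegral : ℝ≥0∞ := ∫⁻ y : En n, ENNReal.ofReal (((‖y‖ + 1) ^ (n + 1))⁻¹)

theorem decayIntegral_ne_top : decayIntegral n ≠ ∞ :=
  (lintegral_inv_norm_add_one_pow_lt_top volume (by simp)).ne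

theorem lintegral_weightedSq_le (v : En n → En m) (x₀ : En n) (ρ : ℝ) :
    ∫⁻ y, weightedSq v x₀ y ≤
      (∫⁻ y in ball x₀ ρ, ENNReal.ofReal (‖v y‖ ^ 2)) + ∫⁻ y in (ball x₀ ρ)ᶜ, weightedSq v x₀ y := by
  rw [← lintegral_add_compl _ measurableSet_ball]
  gcongr with y
  exact ENNReal.ofReal_le_ofReal
    (div_le_self (sq_nonneg _) (one_le_pow₀ (le_add_of_nonneg_left (norm_nonneg _))))

theorem setLIntegral_compl_ball_weightedSq_le {ρ : ℝ} (hρ : 0 < ρ) (v : En n → En m)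
    {x₀ x : En n} (hx : x ∈ ball x₀ (ρ / 2)) :
    ∫⁻ y in (ball x₀ ρ)ᶜ, weightedSq v x₀ y ≤
      ENNReal.ofReal (2 * (3 / 2) ^ (n + 1)) * (∫⁻ y in (ball x₀ ρ)ᶜ, kern v x y) +
        2 * decayIntegral n * ENNReal.ofReal (‖v x‖ ^ 2) := by
  set w : En n → ℝ≥0∞ := fun y => ENNReal.ofReal (((‖y‖ + 1) ^ (n + 1))⁻¹)
  have hw : Measurable fun y => w (y - x₀) := by fun_prop
  have hpointwise : ∀ y ∈ (ball x₀ ρ)ᶜ, weightedSq v x₀ y ≤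
      ENNReal.ofReal (2 * (3 / 2) ^ (n + 1)) * kern v x y +
        ENNReal.ofReal (2 * ‖v x‖ ^ 2) * w (y - x₀) := fun y hy => by
    rw [weightedSq, kern, ← ENNReal.ofReal_mul (by positivity), ← ENNReal.ofReal_mul (by positivity),
      ← ENNReal.ofReal_add (by positivity) (by positivity)]
    exact ENNReal.ofReal_le_ofReal
      (sq_div_add_one_pow_le_of_mem_ball_of_notMem_ball (n + 1) hρ v hx hy)
  calc ∫⁻ y in (ball x₀ ρ)ᶜ, weightedSq v x₀ y
      ≤ ∫⁻ y in (ball x₀ ρ)ᶜ, (ENNReal.ofReal (2 * (3 / 2) ^ (n + 1)) * kern v x y +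
          ENNReal.ofReal (2 * ‖v x‖ ^ 2) * w (y - x₀)) :=
        setLIntegral_mono' measurableSet_ball.compl hpointwise
    _ = ENNReal.ofReal (2 * (3 / 2) ^ (n + 1)) * (∫⁻ y in (ball x₀ ρ)ᶜ, kern v x y) +
          ENNReal.ofReal (2 * ‖v x‖ ^ 2) * ∫⁻ y in (ball x₀ ρ)ᶜ, w (y - x₀) := by
        rw [lintegral_add_right _ (hw.const_mul _), lintegral_const_mul' _ _ ENNReal.ofReal_ne_top,
          lintegral_const_mul' _ _ ENNReal.ofReal_ne_top]
    _ ≤ ENNReal.ofReal (2 * (3 / 2) ^ (n + 1)) * (∫⁻ y in (ball x₀ ρ)ᶜ, kern v x y) +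
          ENNReal.ofReal (2 * ‖v x‖ ^ 2) * ∫⁻ y, w (y - x₀) := by
        gcongr
        exact Measure.restrict_le_self
    _ = _ := by
        have hK : ∫⁻ y, w y = decayIntegral n := rfl
        rw [lintegral_sub_right_eq_self w x₀, hK, ENNReal.ofReal_mul (q := ‖v x‖ ^ 2) zero_le_two,
          ENNReal.ofReal_ofNat]
        ring

theorem volume_ball_mul_setLIntegral_compl_ball_weightedSq_le {ρ : ℝ} (hρ : 0 < ρ)
    {v : En n → En m} (hv : AEStronglyMeasurable v volume) (x₀ : En n) :
    volume (ball x₀ (ρ / 2)) * ∫⁻ y in (ball x₀ ρ)ᶜ, weightedSq v x₀ y ≤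
      ENNReal.ofReal (2 * (3 / 2) ^ (n + 1)) * (∫⁻ x in ball x₀ ρ, ∫⁻ y in (ball x₀ ρ)ᶜ, kern v x y) +
        2 * decayIntegral n * ∫⁻ x in ball x₀ ρ, ENNReal.ofReal (‖v x‖ ^ 2) := by
  have hsub : ball x₀ (ρ / 2) ⊆ ball x₀ ρ := ball_subset_ball (by linarith)
  have hvsq : AEMeasurable (fun x => 2 * decayIntegral n * ENNReal.ofReal (‖v x‖ ^ 2))
      (volume.restrict (ball x₀ (ρ / 2))) :=
    ((hv.norm.aemeasurable.pow_const 2).ennreal_ofReal.const_mul _).restrict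
  calc volume (ball x₀ (ρ / 2)) * ∫⁻ y in (ball x₀ ρ)ᶜ, weightedSq v x₀ y
      = ∫⁻ _ in ball x₀ (ρ / 2), ∫⁻ y in (ball x₀ ρ)ᶜ, weightedSq v x₀ y := by
        rw [setLIntegral_const, mul_comm]
    _ ≤ ∫⁻ x in ball x₀ (ρ / 2), (ENNReal.ofReal (2 * (3 / 2) ^ (n + 1)) *
          (∫⁻ y in (ball x₀ ρ)ᶜ, kern v x y) + 2 * decayIntegral n * ENNReal.ofReal (‖v x‖ ^ 2)) :=
        setLIntegral_mono' measurableSet_ball fun x hx =>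
          setLIntegral_compl_ball_weightedSq_le hρ v hx
    _ = ENNReal.ofReal (2 * (3 / 2) ^ (n + 1)) *
          (∫⁻ x in ball x₀ (ρ / 2), ∫⁻ y in (ball x₀ ρ)ᶜ, kern v x y) +
            2 * decayIntegral n * ∫⁻ x in ball x₀ (ρ / 2), ENNReal.ofReal (‖v x‖ ^ 2) := by
        rw [lintegral_add_right' _ hvsq, lintegral_const_mul' _ _ ENNReal.ofReal_ne_top,
          lintegral_const_mul' _ _ (ENNReal.mul_ne_top ENNReal.ofNat_ne_top decayIntegral_ne_top)]
    _ ≤ _ := by gcongr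

end Tail

theorem gam_pos (n : ℕ) : 0 < gam n :=
  div_pos (Real.Gamma_pos_of_pos (by positivity)) (Real.rpow_pos_of_pos Real.pi_pos _)

theorem mul_lintegral_compl_kern_le_energyE {n m : ℕ} (v : En n → En m) (s : Set (En n)) :
    ENNReal.ofReal (gam n / 2) * (∫⁻ x in s, ∫⁻ y in sᶜ, kern v x y) ≤ energyE v s :=
  le_add_self

def weightedL2Const (n : ℕ) (ρ : ℝ) : ℝ≥0∞ :=
  (ENNReal.ofReal (gam n / 2) * volume (ball (0 : En n) (ρ / 2)))⁻¹ *
    (ENNReal.ofReal (2 * (3 / 2) ^ (n + 1)) +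
      ENNReal.ofReal (gam n / 2) * (volume (ball (0 : En n) (ρ / 2)) + 2 * decayIntegral n))

theorem weightedL2Const_ne_zero (n : ℕ) (ρ : ℝ) : weightedL2Const n ρ ≠ 0 :=
  mul_ne_zero (ENNReal.inv_ne_zero.2 (ENNReal.mul_ne_top ENNReal.ofReal_ne_top measure_ball_lt_top.ne))
    fun h => (ENNReal.ofReal_pos.2 (by positivity : (0 : ℝ) < 2 * (3 / 2) ^ (n + 1))).ne'
      (add_eq_zero.1 h).1

theorem ofReal_gam_half_mul_volume_ball_ne_zero (n : ℕ) {ρ : ℝ} (hρ : 0 < ρ) :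
    ENNReal.ofReal (gam n / 2) * volume (ball (0 : En n) (ρ / 2)) ≠ 0 :=
  mul_ne_zero (ENNReal.ofReal_pos.2 (by linarith [gam_pos n])).ne'
    (measure_ball_pos volume 0 (by positivity)).ne'

theorem weightedL2Const_ne_top (n : ℕ) {ρ : ℝ} (hρ : 0 < ρ) : weightedL2Const n ρ ≠ ∞ := by
  refine ENNReal.mul_ne_top (ENNReal.inv_ne_top.2 (ofReal_gam_half_mul_volume_ball_ne_zero n hρ)) ?_
  exact ENNReal.add_ne_top.2 ⟨ENNReal.ofReal_ne_top, ENNReal.mul_ne_top ENNReal.ofReal_ne_top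
    (ENNReal.add_ne_top.2 ⟨measure_ball_lt_top.ne, ENNReal.mul_ne_top ENNReal.ofNat_ne_top
      decayIntegral_ne_top⟩)⟩

theorem lintegral_weightedSq_le_weightedL2Const_mul {n m : ℕ} {ρ : ℝ} (hρ : 0 < ρ)
    {v : En n → En m} (hv : AEStronglyMeasurable v volume) (x₀ : En n) :
    ∫⁻ y, weightedSq v x₀ y ≤
      weightedL2Const n ρ * (energyE v (ball x₀ ρ) + ∫⁻ x in ball x₀ ρ, ENNReal.ofReal (‖v x‖ ^ 2)) := by
  set a := ENNReal.ofReal (gam n / 2)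
  set b := volume (ball (0 : En n) (ρ / 2))
  set c := ENNReal.ofReal (2 * (3 / 2) ^ (n + 1))
  set K := decayIntegral n
  set E := energyE v (ball x₀ ρ)
  set S := ∫⁻ x in ball x₀ ρ, ENNReal.ofReal (‖v x‖ ^ 2)
  set T := ∫⁻ y in (ball x₀ ρ)ᶜ, weightedSq v x₀ y
  set I := ∫⁻ x in ball x₀ ρ, ∫⁻ y in (ball x₀ ρ)ᶜ, kern v x y
  have hab0 : a * b ≠ 0 := ofReal_gam_half_mul_volume_ball_ne_zero n hρ
  have hab : a * b ≠ ∞ := ENNReal.mul_ne_top ENNReal.ofReal_ne_top measure_ball_lt_top.ne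
  have htail : b * T ≤ c * I + 2 * K * S := by
    simpa only [Measure.addHaar_ball_center] using
      volume_ball_mul_setLIntegral_compl_ball_weightedSq_le hρ hv x₀
  have hcross : a * I ≤ E := mul_lintegral_compl_kern_le_energyE v (ball x₀ ρ)
  rw [weightedL2Const, mul_assoc, ← ENNReal.mul_le_iff_le_inv hab0 hab]
  calc a * b * ∫⁻ y, weightedSq v x₀ y
      ≤ a * b * (S + T) := by gcongr; exact lintegral_weightedSq_le v x₀ ρ
    _ = a * b * S + a * (b * T) := by ring
    _ ≤ a * b * S + a * (c * I + 2 * K * S) := by gcongr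
    _ = c * (a * I) + a * (b + 2 * K) * S := by ring
    _ ≤ c * E + a * (b + 2 * K) * S := by gcongr
    _ ≤ (c + a * (b + 2 * K)) * (E + S) := by
        rw [add_mul, mul_add, mul_add]
        gcongr <;> simp

theorem statement0_general (n m : ℕ) (ρ : ℝ) (hρ : 0 < ρ) :
    ∃ C : ℝ, 0 < C ∧
      ∀ (ω : Set (En n)), IsOpen ω → Bornology.IsBounded ω →
        ∀ x₀ : En n, x₀ ∈ ω → ball x₀ ρ ⊆ ω →
          ∀ v : En n → En m, MemHatH v ω →
            (∫⁻ x, ENNReal.ofReal (‖v x‖ ^ 2 / (‖x - x₀‖ + 1) ^ (n + 1))) ≤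
              ENNReal.ofReal C *
                (energyE v (ball x₀ ρ) +
                  ∫⁻ x in ball x₀ ρ, ENNReal.ofReal (‖v x‖ ^ 2)) := by
  refine ⟨(weightedL2Const n ρ).toReal,
    ENNReal.toReal_pos (weightedL2Const_ne_zero n ρ) (weightedL2Const_ne_top n hρ), ?_⟩
  intro ω _ _ x₀ _ _ v hv
  rw [ENNReal.ofReal_toReal (weightedL2Const_ne_top n hρ)]
  exact lintegral_weightedSq_le_weightedL2Const_mul hρ hv.1.1 x₀

/-- Lemma `adminHchap`: given `ρ > 0` there is a constant `C = C_ρ > 0`,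
depending only on `n` and `ρ` (in particular independent of `x₀` and of `ω`), such that for
every bounded open `ω`, every `x₀ ∈ ω` with `D_ρ(x₀) ⊆ ω` and every `v ∈ Ĥ^{1/2}(ω;ℝᵐ)`,
`∫_{ℝⁿ} |v x|²/(|x-x₀|+1)^{n+1} dx ≤ C (E(v, D_ρ(x₀)) + ∫_{D_ρ(x₀)} |v|²)`. -/
theorem statement0 (n m : ℕ) (hn : 1 ≤ n) (hm : 1 ≤ m) (ρ : ℝ) (hρ : 0 < ρ) :
    ∃ C : ℝ, 0 < C ∧
      ∀ (ω : Set (En n)), IsOpen ω → Bornology.IsBounded ω →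
        ∀ x₀ : En n, x₀ ∈ ω → ball x₀ ρ ⊆ ω →
          ∀ v : En n → En m, MemHatH v ω →
            (∫⁻ x, ENNReal.ofReal (‖v x‖ ^ 2 / (‖x - x₀‖ + 1) ^ (n + 1))) ≤
              ENNReal.ofReal C *
                (energyE v (ball x₀ ρ) +
                  ∫⁻ x in ball x₀ ρ, ENNReal.ofReal (‖v x‖ ^ 2)) :=
  statement0_general n m ρ hρ
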